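/- Let M be a loopless matroid on a finite ground set E and B a building set for M. Then the inclusion-maximal elements of B are pairwise disjoint, every element of E lies in some member of max(B) (so max(B) partitions the ground set E), and every flat X ∈ B is contained in exactly one member of max(B). -/

import Mathlib

open Set Matroid
open scoped Matroid

variable {α : Type*}

/-- Two sets are incomparable under inclusion. -/
def Incomp (X Y : Set α) : Prop := ¬ X ⊆ Y ∧ ¬ Y ⊆ X

/-- The inclusion-maximal elements of a family of sets. -/
def maxB (B : Set (Set α)) : Set (Set α) := {X ∈ B | ∀ Y ∈ B, X ⊆ Y → X = Y}

/-- The rank of a set in a matroid: the largest size of an independent subset. -/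
noncomputable def mrank (M : Matroid α) (X : Set α) : ℕ :=
  sSup {n : ℕ | ∃ I ⊆ X, M.Indep I ∧ I.ncard = n}

/-- A matroid is loopless if every singleton of the ground set is independent. -/
def MLoopless (M : Matroid α) : Prop := ∀ e ∈ M.E, M.Indep {e}

/-- A matroid is connected if its rank function is not additive over any
separation of the ground set into two nonempty parts. -/
def MConnected (M : Matroid α) : Prop :=
  ∀ A B : Set α, A ∪ B = M.E → Disjoint A B → A.Nonempty → B.Nonempty →
    mrank M A + mrank M B ≠ mrank M M.E

/-- A building set for a matroid `M`: a set of nonempty flats containing all nonempty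
flats whose restriction is connected, and closed under joins of intersecting members. -/
def IsBuildingSet (M : Matroid α) (B : Set (Set α)) : Prop :=
  (∀ X ∈ B, M.IsFlat X ∧ X.Nonempty) ∧
  (∀ X, M.IsFlat X → X.Nonempty → MConnected (M.restrict X) → X ∈ B) ∧
  (∀ X ∈ B, ∀ Y ∈ B, (X ∩ Y).Nonempty → M.closure (X ∪ Y) ∈ B)

/-- A nested set of a building set `B`. -/
def IsNested (M : Matroid α) (B N : Set (Set α)) : Prop :=
  N ⊆ B ∧ maxB B ⊆ N ∧
  ∀ S : Set (Set α), S ⊆ N → S.Nontrivial → S.Pairwise Incomp →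
    M.closure (⋃₀ S) ∉ B

/-- An inclusion-maximal nested set. -/
def IsMaxNested (M : Matroid α) (B N : Set (Set α)) : Prop :=
  IsNested M B N ∧ ∀ N', IsNested M B N' → N ⊆ N' → N' = N

/-- An atom of a matroid: a rank-one flat. -/
def IsAtomFlat (M : Matroid α) (A : Set α) : Prop := M.IsFlat A ∧ mrank M A = 1

/-- Atoms are compared by their least elements. -/
def atomLE [Preorder α] (A A' : Set α) : Prop :=
  ∃ a a', IsLeast A a ∧ IsLeast A' a' ∧ a ≤ a'

/-- Strict comparison of atoms by their least elements. -/
def atomLT [Preorder α] (A A' : Set α) : Prop :=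
  ∃ a a', IsLeast A a ∧ IsLeast A' a' ∧ a < a'

/-- `A` is an admissible label for `X` within the family `S`:
an atom contained in `X` but in no member of `S` properly below `X`. -/
def GoodLabel (M : Matroid α) (S : Set (Set α)) (X A : Set α) : Prop :=
  IsAtomFlat M A ∧ A ⊆ X ∧ ∀ Y ∈ S, Y ⊂ X → ¬ A ⊆ Y

/-- `A` is the label `m_S(X)`: the least admissible label for `X` within `S`. -/
def IsMinLabel [Preorder α] (M : Matroid α) (S : Set (Set α)) (X A : Set α) : Prop :=
  GoodLabel M S X A ∧ ∀ A', GoodLabel M S X A' → atomLE A A'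

/-- `NLListing M N R L` : `L` is the NL-listing of the remaining family `R`
(labels computed with respect to the whole family `N`), obtained by repeatedly
plucking the inclusion-minimal member with least label. -/
inductive NLListing [Preorder α] (M : Matroid α) (N : Set (Set α)) :
    Set (Set α) → List (Set α × Set α) → Prop
  | nil : NLListing M N ∅ []
  | cons {R : Set (Set α)} {X A : Set α} {L : List (Set α × Set α)} :
      X ∈ R →
      (∀ Y ∈ R, Y ⊆ X → Y = X) →
      IsMinLabel M N X A →
      (∀ Y ∈ R, (∀ W ∈ R, W ⊆ Y → W = Y) → ∀ A', IsMinLabel M N Y A' → atomLE A A') →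
      NLListing M N (R \ {X}) L →
      NLListing M N R ((X, A) :: L)

/-- A descent of a list of atoms at position `i`. -/
def HasDescentAt [Preorder α] (L : List (Set α)) (i : ℕ) : Prop :=
  ∃ h : i + 1 < L.length, atomLT (L.get ⟨i + 1, h⟩) (L.get ⟨i, Nat.lt_of_succ_lt h⟩)

/-- The indicator vector of a set. -/
noncomputable def indVec (X : Set α) : α → ℝ := X.indicator 1

/-- `v` is the vertex of the nested set `N` for the weight vector `c`. -/
def IsVertex (M : Matroid α) (B : Set (Set α)) (c : Set α → ℝ) (N : Set (Set α))
    (v : α → ℝ) : Prop :=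
  (∀ X ∈ N, ∑ᶠ a ∈ X, v a = c X) ∧
  ∃ lam mu : Set α → ℝ,
    (∀ X ∈ N \ maxB B, 0 < lam X) ∧
    v = (∑ᶠ X ∈ N \ maxB B, lam X • indVec X) + ∑ᶠ Y ∈ maxB B, mu Y • indVec Y

/-- `c` is cubical: every nested set has a unique vertex. -/
def IsCubical (M : Matroid α) (B : Set (Set α)) (c : Set α → ℝ) : Prop :=
  ∀ N, IsNested M B N → ∃! v, IsVertex M B c N v

/-- Lexicographic comparison of vectors in `ℝ^E`. -/
def lexLt [LinearOrder α] (u v : α → ℝ) : Prop :=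
  ∃ i, u i < v i ∧ ∀ j, j < i → u j = v j

open Classical in
/-- The map `τ_Z`. -/
noncomputable def tau (M : Matroid α) (Z X : Set α) : Set α :=
  if X ⊆ Z then X else M.closure (X ∪ Z) \ Z

/-- `MZ` is the contraction `M ／ Z`. -/
def IsContraction (M MZ : Matroid α) (Z : Set α) : Prop :=
  MZ.E = M.E \ Z ∧
  ∀ I : Set α, MZ.Indep I ↔ I ⊆ M.E \ Z ∧ ∃ J, M.IsBasis J Z ∧ M.Indep (I ∪ J)

/-- Auxiliary: in a finite type, every member of `B` lies below a maximal member. -/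
lemma exists_maxB_superset {α : Type*} [Fintype α] {B : Set (Set α)} {X : Set α}
    (hX : X ∈ B) : ∃ F ∈ maxB B, X ⊆ F := by
  have hfin : {Y ∈ B | X ⊆ Y}.Finite := (Set.finite_univ.subset (Set.subset_univ _))
  have hne : {Y ∈ B | X ⊆ Y}.Nonempty := ⟨X, hX, subset_rfl⟩
  obtain ⟨F, hF, hmax⟩ := hfin.exists_maximal hne
  refine ⟨F, ⟨hF.1, fun Y hY hFY => hFY.antisymm (hmax ⟨hY, hF.2.trans hFY⟩ hFY)⟩, hF.2⟩

/-- The closure of any set is a flat. -/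
lemma flat_closure' (M : Matroid α) (X : Set α) : M.IsFlat (M.closure X) := by
  refine ⟨fun I Y hIF hIY => ?_, M.closure_subset_ground X⟩
  have h := hIY.subset_closure
  rwa [hIF.closure_eq_closure, closure_closure] at h

/-- Auxiliary: the restriction of a loopless matroid to the closure of a
singleton of the ground set is connected. -/
lemma closure_singleton_connected {α : Type*} [Fintype α] {M : Matroid α}
    (hM : MLoopless M) {a : α} (ha : a ∈ M.E) :
    MConnected (M.restrict (M.closure {a})) := by
  set Z := M.closure {a} with hZ
  have hZE : Z ⊆ M.E := M.closure_subset_ground _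
  have haind : M.Indep {a} := hM a ha
  have hbas : M.IsBasis {a} Z := haind.isBasis_closure
  -- any nonempty subset of Z has mrank ≥ 1 in the restriction
  have hbdd : ∀ A : Set α, BddAbove {n : ℕ | ∃ I ⊆ A, (M ↾ Z).Indep I ∧ I.ncard = n} := by
    intro A
    refine ⟨Fintype.card α, fun n hn => ?_⟩
    obtain ⟨I, -, -, rfl⟩ := hn
    exact (Set.ncard_le_ncard (Set.subset_univ I) Set.finite_univ).trans
      (le_of_eq (by simp [Set.ncard_univ]))
  have hge : ∀ A : Set α, A ⊆ Z → A.Nonempty → 1 ≤ mrank (M ↾ Z) A := by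
    intro A hAZ ⟨x, hx⟩
    refine le_csSup (hbdd A) ?_
    exact ⟨{x}, Set.singleton_subset_iff.2 hx,
      Matroid.restrict_indep_iff.2 ⟨hM x (hZE (hAZ hx)), Set.singleton_subset_iff.2 (hAZ hx)⟩,
      Set.ncard_singleton x⟩
  have hle : mrank (M ↾ Z) Z ≤ 1 := by
    refine csSup_le ⟨0, ∅, Set.empty_subset _, (M ↾ Z).empty_indep, Set.ncard_empty _⟩ ?_
    rintro n ⟨I, hIZ, hI, rfl⟩
    obtain ⟨hI', -⟩ := Matroid.restrict_indep_iff.1 hI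
    obtain ⟨J, hJ, hIJ⟩ := hI'.subset_isBasis_of_subset hIZ hZE
    have hcard : J.encard = 1 := by
      rw [hJ.encard_eq_encard hbas, Set.encard_singleton]
    have henc : I.encard ≤ 1 := hcard ▸ Set.encard_mono hIJ
    have hIfin : I.Finite := Set.finite_univ.subset (Set.subset_univ I)
    rw [hIfin.encard_eq_coe_toFinset_card, ← Nat.cast_one, Nat.cast_le,
      ← Set.ncard_eq_toFinset_card I hIfin] at henc
    exact henc
  intro A C hAC hdisjAC hAne hCne h
  have hACZ : A ∪ C = Z := hAC
  have hA : A ⊆ Z := hACZ ▸ Set.subset_union_left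
  have hC : C ⊆ Z := hACZ ▸ Set.subset_union_right
  have h2 : 2 ≤ mrank (M ↾ Z) A + mrank (M ↾ Z) C :=
    add_le_add (hge A hA hAne) (hge C hC hCne)
  have hground : mrank (M ↾ Z) (M ↾ Z).E ≤ 1 := hle
  omega

/-- the inclusion-maximal members of a building set partition the
ground set, and every member of the building set is contained in exactly one of them. -/
theorem maxB_partitions {α : Type*} [Fintype α] [LinearOrder α]
    (M : Matroid α) (hM : MLoopless M)
    (B : Set (Set α)) (hB : IsBuildingSet M B) :
    (∀ X ∈ maxB B, ∀ Y ∈ maxB B, X ≠ Y → X ∩ Y = ∅) ∧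
    (∀ a ∈ M.E, ∃ X ∈ maxB B, a ∈ X) ∧
    (∀ X ∈ B, ∃! F, F ∈ maxB B ∧ X ⊆ F) := by
  obtain ⟨hflat, hconn, hjoin⟩ := hB
  have hdisj : ∀ X ∈ maxB B, ∀ Y ∈ maxB B, X ≠ Y → X ∩ Y = ∅ := by
    intro X hX Y hY hne
    by_contra hcap
    have hcap' : (X ∩ Y).Nonempty := Set.nonempty_iff_ne_empty.2 hcap
    have hJ : M.closure (X ∪ Y) ∈ B := hjoin X hX.1 Y hY.1 hcap'
    have hXE : X ⊆ M.E := (hflat X hX.1).1.subset_ground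
    have hYE : Y ⊆ M.E := (hflat Y hY.1).1.subset_ground
    have hsub : X ∪ Y ⊆ M.closure (X ∪ Y) :=
      M.subset_closure _ (Set.union_subset hXE hYE)
    have h1 : X = M.closure (X ∪ Y) :=
      hX.2 _ hJ (Set.subset_union_left.trans hsub)
    have h2 : Y = M.closure (X ∪ Y) :=
      hY.2 _ hJ (Set.subset_union_right.trans hsub)
    exact hne (h1.trans h2.symm)
  refine ⟨hdisj, ?_, ?_⟩
  · intro a ha
    have hZ : M.closure {a} ∈ B := by
      refine hconn _ (flat_closure' M _) ⟨a, M.subset_closure {a} (by simpa) rfl⟩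
        (closure_singleton_connected hM ha)
    obtain ⟨F, hF, hsub⟩ := exists_maxB_superset hZ
    exact ⟨F, hF, hsub (M.subset_closure {a} (by simpa) rfl)⟩
  · intro X hX
    obtain ⟨F, hF, hsub⟩ := exists_maxB_superset hX
    refine ⟨F, ⟨hF, hsub⟩, ?_⟩
    rintro F' ⟨hF', hsub'⟩
    by_contra hne
    have := hdisj F' hF' F hF hne
    obtain ⟨x, hx⟩ := (hflat X hX).2
    exact absurd this (Set.nonempty_iff_ne_empty.1 ⟨x, hsub' hx, hsub hx⟩)
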